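/- arXiv:2103.07041 — 4 statements merged into one kernel-verified Lean document; each statement's English description precedes it below -/
import Mathlib

section
/- If {v, w, μ} is a Bishop frame along the framed curve γ (i.e. ℓ̄ ≡ 0), then for any λ ≠ 0 the parallel curve P(t) = γ(t) + λ v(t) together with (v, w) forms a framed curve: P'(t)·v(t) = 0 and P'(t)·w(t) = 0 for all t. -/
open Matrix

lemma dot_hasDerivAt' {f g : ℝ → Fin 3 → ℝ} {f' g' : Fin 3 → ℝ} {t : ℝ}
    (hf : HasDerivAt f f' t) (hg : HasDerivAt g g' t) :
    HasDerivAt (fun s => f s ⬝ᵥ g s) (f' ⬝ᵥ g t + f t ⬝ᵥ g') t := by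
  simp only [dotProduct, ← Finset.sum_add_distrib]
  exact HasDerivAt.fun_sum fun i _ => (hasDerivAt_pi.1 hf i).mul (hasDerivAt_pi.1 hg i)

/-- For a Bishop frame (ℓ̄ ≡ 0), the parallel curve P = γ + λ v with (v, w) is a
framed curve. -/
theorem parallel_curve_bishop_framed
    (γ v w : ℝ → Fin 3 → ℝ)
    (hγ : ContDiff ℝ (⊤ : ℕ∞) γ) (hv : ContDiff ℝ (⊤ : ℕ∞) v) (hw : ContDiff ℝ (⊤ : ℕ∞) w)
    (hu₁ : ∀ t, v t ⬝ᵥ v t = 1) (hu₂ : ∀ t, w t ⬝ᵥ w t = 1)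
    (horth : ∀ t, v t ⬝ᵥ w t = 0)
    (ht₁ : ∀ t, deriv γ t ⬝ᵥ v t = 0) (ht₂ : ∀ t, deriv γ t ⬝ᵥ w t = 0)
    (μ : ℝ → Fin 3 → ℝ) (hμ : ∀ t, μ t = v t ⨯₃ w t)
    (ℓ' m' n' α : ℝ → ℝ)
    (hℓ : ∀ t, ℓ' t = deriv v t ⬝ᵥ w t)
    (hm : ∀ t, m' t = deriv v t ⬝ᵥ μ t)
    (hn : ∀ t, n' t = deriv w t ⬝ᵥ μ t)
    (hα : ∀ t, α t = deriv γ t ⬝ᵥ μ t)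
    (hBishop : ∀ t, ℓ' t = 0)
    (lam : ℝ) (hlam : lam ≠ 0)
    (P : ℝ → Fin 3 → ℝ) (hP : ∀ t, P t = γ t + lam • v t) :
    ∀ t, deriv P t ⬝ᵥ v t = 0 ∧ deriv P t ⬝ᵥ w t = 0 := by
  intro t
  have hγd : HasDerivAt γ (deriv γ t) t := (hγ.differentiable (by simp) t).hasDerivAt
  have hvd : HasDerivAt v (deriv v t) t := (hv.differentiable (by simp) t).hasDerivAt
  -- derivative of P
  have hPd : HasDerivAt P (deriv γ t + lam • deriv v t) t := by
    have : HasDerivAt (fun s => γ s + lam • v s) (deriv γ t + lam • deriv v t) t :=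
      hγd.add (hvd.const_smul lam)
    exact this.congr_of_eventuallyEq (Filter.Eventually.of_forall fun s => (hP s))
  have hPderiv : deriv P t = deriv γ t + lam • deriv v t := hPd.deriv
  -- v' ⬝ v = 0
  have hvv : deriv v t ⬝ᵥ v t = 0 := by
    have h1 : HasDerivAt (fun s => v s ⬝ᵥ v s) (deriv v t ⬝ᵥ v t + v t ⬝ᵥ deriv v t) t :=
      dot_hasDerivAt' hvd hvd
    have h2 : HasDerivAt (fun s => v s ⬝ᵥ v s) 0 t := by
      have : (fun s => v s ⬝ᵥ v s) = fun _ => (1 : ℝ) := funext hu₁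
      rw [this]; exact hasDerivAt_const t 1
    have h3 := h1.unique h2
    have h4 : v t ⬝ᵥ deriv v t = deriv v t ⬝ᵥ v t := dotProduct_comm _ _
    linarith [h3, h4]
  have hvw : deriv v t ⬝ᵥ w t = 0 := by rw [← hℓ t]; exact hBishop t
  constructor
  · rw [hPderiv, add_dotProduct, smul_dotProduct, ht₁ t, hvv, smul_zero]; ring
  · rw [hPderiv, add_dotProduct, smul_dotProduct, ht₂ t, hvw, smul_zero]; ring
end

section
/- Let (γ, v, w) be a framed curve with μ = v × w and curvature (ℓ̄, m̄, n̄, α). For the normal surface NS(t, λ) = γ(t) + λ v(t), one has det(γ'(t), v(t), v'(t)) = α(t) ℓ̄(t), and the cross product of partial derivatives satisfies NS_t × NS_λ = (α(t) + λ m̄(t)) w(t) − λ ℓ̄(t) μ(t). In particular, (t₀, λ₀) is a singular point of NS if and only if α(t₀) + λ₀ m̄(t₀) = 0 and λ₀ ℓ̄(t₀) = 0. -/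
open Matrix

private lemma bac_cab' (a b c : Fin 3 → ℝ) :
    a ⨯₃ (b ⨯₃ c) = (a ⬝ᵥ c) • b - (a ⬝ᵥ b) • c := by
  funext i
  fin_cases i <;>
    simp [cross_apply, dotProduct, Fin.sum_univ_three] <;> ring

private lemma decomp' (b c x : Fin 3 → ℝ) (h1 : b ⬝ᵥ b = 1) (h2 : c ⬝ᵥ c = 1)
    (h3 : b ⬝ᵥ c = 0) :
    x = (x ⬝ᵥ b) • b + (x ⬝ᵥ c) • c + (x ⬝ᵥ (b ⨯₃ c)) • (b ⨯₃ c) := by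
  have hmm : (b ⨯₃ c) ⬝ᵥ (b ⨯₃ c) = 1 := by
    rw [cross_dot_cross, h1, h2, h3]; ring
  have key := bac_cab' (b ⨯₃ c) (b ⨯₃ c) x
  have h4 : (b ⨯₃ c) ⨯₃ x = (x ⬝ᵥ b) • c - (x ⬝ᵥ c) • b := by
    rw [← cross_anticomm, bac_cab' x b c]
    module
  rw [h4] at key
  have h5 : (b ⨯₃ c) ⨯₃ ((x ⬝ᵥ b) • c - (x ⬝ᵥ c) • b)
      = (x ⬝ᵥ b) • ((b ⨯₃ c) ⨯₃ c) - (x ⬝ᵥ c) • ((b ⨯₃ c) ⨯₃ b) := by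
    simp [map_sub, _root_.map_smul]
  have h6 : (b ⨯₃ c) ⨯₃ c = -b := by
    rw [← cross_anticomm, bac_cab' c b c, h2, dotProduct_comm c b, h3]
    module
  have h7 : (b ⨯₃ c) ⨯₃ b = c := by
    rw [← cross_anticomm, bac_cab' b b c, h1, h3]
    module
  rw [h5, h6, h7, dotProduct_comm (b ⨯₃ c) x, hmm] at key
  linear_combination (norm := module) key

private lemma key_all (a b c d : Fin 3 → ℝ) (lam : ℝ)
    (h1 : b ⬝ᵥ b = 1) (h2 : c ⬝ᵥ c = 1) (h3 : b ⬝ᵥ c = 0)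
    (h4 : a ⬝ᵥ b = 0) (h5 : a ⬝ᵥ c = 0) (h6 : d ⬝ᵥ b = 0) :
    a ⬝ᵥ (b ⨯₃ d) = (a ⬝ᵥ (b ⨯₃ c)) * (d ⬝ᵥ c) ∧
    (a + lam • d) ⨯₃ b
      = (a ⬝ᵥ (b ⨯₃ c) + lam * (d ⬝ᵥ (b ⨯₃ c))) • c - (lam * (d ⬝ᵥ c)) • (b ⨯₃ c) ∧
    a + lam • d
      = (lam * (d ⬝ᵥ c)) • c + (a ⬝ᵥ (b ⨯₃ c) + lam * (d ⬝ᵥ (b ⨯₃ c))) • (b ⨯₃ c) := by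
  have ha : a = (a ⬝ᵥ (b ⨯₃ c)) • (b ⨯₃ c) := by
    have h := decomp' b c a h1 h2 h3
    rw [h4, h5] at h
    simpa using h
  have hd : d = (d ⬝ᵥ c) • c + (d ⬝ᵥ (b ⨯₃ c)) • (b ⨯₃ c) := by
    have h := decomp' b c d h1 h2 h3
    rw [h6] at h
    simpa using h
  have hmb : (b ⨯₃ c) ⨯₃ b = c := by
    rw [← cross_anticomm, bac_cab' b b c, h1, h3]
    module
  have hbm : b ⨯₃ (b ⨯₃ c) = -c := by
    rw [bac_cab' b b c, h1, h3]
    module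
  have hcb : c ⨯₃ b = -(b ⨯₃ c) := (cross_anticomm b c).symm
  refine ⟨?_, ?_, ?_⟩
  · conv_lhs => rw [hd]
    rw [map_add, _root_.map_smul, _root_.map_smul, hbm]
    simp only [dotProduct_add, dotProduct_smul, dotProduct_neg, h5, smul_eq_mul]
    ring
  · conv_lhs => rw [ha, hd]
    simp only [map_add, _root_.map_smul, LinearMap.add_apply, LinearMap.smul_apply,
      hmb, hcb]
    module
  · conv_lhs => rw [ha, hd]
    module

/-- Basic formulas for the normal surface NS(t, λ) = γ(t) + λ v(t): the determinant
det(γ', v, v') = α ℓ̄, the cross product of partial derivatives, and the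
characterization of singular points. -/
theorem normal_surface_basic
    (γ v w : ℝ → Fin 3 → ℝ)
    (hγ : ContDiff ℝ (⊤ : ℕ∞) γ) (hv : ContDiff ℝ (⊤ : ℕ∞) v) (hw : ContDiff ℝ (⊤ : ℕ∞) w)
    (hu₁ : ∀ t, v t ⬝ᵥ v t = 1) (hu₂ : ∀ t, w t ⬝ᵥ w t = 1)
    (horth : ∀ t, v t ⬝ᵥ w t = 0)
    (ht₁ : ∀ t, deriv γ t ⬝ᵥ v t = 0) (ht₂ : ∀ t, deriv γ t ⬝ᵥ w t = 0)
    (μ : ℝ → Fin 3 → ℝ) (hμ : ∀ t, μ t = v t ⨯₃ w t)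
    (ℓ' m' n' α : ℝ → ℝ)
    (hℓ : ∀ t, ℓ' t = deriv v t ⬝ᵥ w t)
    (hm : ∀ t, m' t = deriv v t ⬝ᵥ μ t)
    (hn : ∀ t, n' t = deriv w t ⬝ᵥ μ t)
    (hα : ∀ t, α t = deriv γ t ⬝ᵥ μ t)
    (NS : ℝ → ℝ → Fin 3 → ℝ) (hNS : ∀ t lam, NS t lam = γ t + lam • v t) :
    (∀ t, Matrix.det (Matrix.of ![deriv γ t, v t, deriv v t]) = α t * ℓ' t) ∧
    (∀ t lam, (deriv (fun s => NS s lam) t) ⨯₃ (deriv (fun l => NS t l) lam) =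
        (α t + lam * m' t) • w t - (lam * ℓ' t) • μ t) ∧
    (∀ t₀ lam₀, ¬ LinearIndependent ℝ
          ![deriv (fun s => NS s lam₀) t₀, deriv (fun l => NS t₀ l) lam₀] ↔
        α t₀ + lam₀ * m' t₀ = 0 ∧ lam₀ * ℓ' t₀ = 0) := by
  -- derivative of v is orthogonal to v
  have hdvv : ∀ t, deriv v t ⬝ᵥ v t = 0 := by
    intro t
    have hvd : HasDerivAt v (deriv v t) t := ((hv.differentiable (by simp)) t).hasDerivAt
    have hci : ∀ i, HasDerivAt (fun s => v s i) (deriv v t i) t := hasDerivAt_pi.1 hvd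
    have key : HasDerivAt (fun s => v s 0 * v s 0 + v s 1 * v s 1 + v s 2 * v s 2)
        ((deriv v t 0 * v t 0 + v t 0 * deriv v t 0) + (deriv v t 1 * v t 1 + v t 1 * deriv v t 1)
          + (deriv v t 2 * v t 2 + v t 2 * deriv v t 2)) t :=
      (((hci 0).mul (hci 0)).add ((hci 1).mul (hci 1))).add ((hci 2).mul (hci 2))
    have keyz : HasDerivAt (fun s => v s 0 * v s 0 + v s 1 * v s 1 + v s 2 * v s 2) 0 t := by
      have hfun : (fun s => v s 0 * v s 0 + v s 1 * v s 1 + v s 2 * v s 2) = fun _ => (1:ℝ) := by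
        funext s
        simpa [dotProduct, Fin.sum_univ_three] using hu₁ s
      rw [hfun]; exact hasDerivAt_const _ _
    have h0 := key.unique keyz
    simp only [dotProduct, Fin.sum_univ_three]
    linear_combination h0 / 2
  -- the two partial derivatives of NS
  have hpd₁ : ∀ t lam, deriv (fun s => NS s lam) t = deriv γ t + lam • deriv v t := by
    intro t lam
    have hγd : HasDerivAt γ (deriv γ t) t := ((hγ.differentiable (by simp)) t).hasDerivAt
    have hvd : HasDerivAt v (deriv v t) t := ((hv.differentiable (by simp)) t).hasDerivAt
    have hfun : (fun s => NS s lam) = fun s => γ s + lam • v s := funext fun s => hNS s lam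
    rw [hfun]
    exact (hγd.add (hvd.const_smul lam)).deriv
  have hpd₂ : ∀ t lam, deriv (fun l => NS t l) lam = v t := by
    intro t lam
    have hfun : (fun l => NS t l) = fun l => γ t + l • v t := funext fun l => hNS t l
    rw [hfun]
    have h : HasDerivAt (fun l : ℝ => γ t + l • v t) ((0:Fin 3 → ℝ) + (1:ℝ) • v t) lam :=
      (hasDerivAt_const lam (γ t)).add ((hasDerivAt_id lam).smul_const (v t))
    simpa using h.deriv
  have hka : ∀ t (lam : ℝ), _ ∧ _ ∧ _ := fun t lam =>
    key_all (deriv γ t) (v t) (w t) (deriv v t) lam (hu₁ t) (hu₂ t) (horth t)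
      (ht₁ t) (ht₂ t) (hdvv t)
  refine ⟨?_, ?_, ?_⟩
  · intro t
    have h := (hka t 0).1
    have hdet : Matrix.det (Matrix.of ![deriv γ t, v t, deriv v t])
        = deriv γ t ⬝ᵥ (v t ⨯₃ deriv v t) :=
      (triple_product_eq_det (deriv γ t) (v t) (deriv v t)).symm
    rw [hdet, h, hα t, hℓ t, hμ t]
  · intro t lam
    have h := (hka t lam).2.1
    rw [hpd₁, hpd₂, hα t, hℓ t, hm t, hμ t]
    exact h
  · intro t₀ lam₀
    have hu1 : deriv (fun s => NS s lam₀) t₀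
        = (lam₀ * ℓ' t₀) • w t₀ + (α t₀ + lam₀ * m' t₀) • μ t₀ := by
      rw [hpd₁, (hka t₀ lam₀).2.2, hα t₀, hℓ t₀, hm t₀, hμ t₀]
    have hmm : μ t₀ ⬝ᵥ μ t₀ = 1 := by
      rw [hμ, cross_dot_cross, hu₁ t₀, hu₂ t₀, horth t₀]; ring
    have hmb : μ t₀ ⬝ᵥ v t₀ = 0 := by
      rw [hμ, dotProduct_comm, dot_self_cross]
    have hmc : μ t₀ ⬝ᵥ w t₀ = 0 := by
      rw [hμ, dotProduct_comm, dot_cross_self]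
    have hcb : w t₀ ⬝ᵥ v t₀ = 0 := by rw [dotProduct_comm]; exact horth t₀
    have hwm : w t₀ ⬝ᵥ μ t₀ = 0 := by rw [hμ, dot_cross_self]
    have hvm : v t₀ ⬝ᵥ μ t₀ = 0 := by rw [hμ, dot_self_cross]
    constructor
    · intro hnli
      by_contra hc
      apply hnli
      rw [LinearIndependent.pair_iff]
      intro s u hsu
      rw [hu1, hpd₂] at hsu
      have hdb := congrArg (fun z => z ⬝ᵥ v t₀) hsu
      have hdc := congrArg (fun z => z ⬝ᵥ w t₀) hsu
      have hdm := congrArg (fun z => z ⬝ᵥ μ t₀) hsu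
      simp only [add_dotProduct, smul_dotProduct, smul_eq_mul, zero_dotProduct,
        dotProduct_comm (w t₀) (v t₀), hu₁ t₀, hu₂ t₀, horth t₀, hcb, hmm, hmb, hmc, hwm, hvm,
        dotProduct_smul] at hdb hdc hdm
      have hu0 : u = 0 := by linarith [hdb]
      rw [hu0] at hdc hdm
      have hsB : s * (lam₀ * ℓ' t₀) = 0 := by linarith [hdc]
      have hsA : s * (α t₀ + lam₀ * m' t₀) = 0 := by linarith [hdm]
      rw [not_and_or] at hc
      have hs0 : s = 0 := by
        rcases hc with hc | hc
        · exact (mul_eq_zero.1 hsA).resolve_right hc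
        · exact (mul_eq_zero.1 hsB).resolve_right hc
      exact ⟨hs0, hu0⟩
    · rintro ⟨hA, hB⟩ hli
      apply hli.ne_zero 0
      show deriv (fun s => NS s lam₀) t₀ = 0
      rw [hu1, hA, hB]
      simp
end

section
/- Let (γ, v, w) be a framed curve with μ = v × w and curvature (ℓ̄, m̄, n̄, α), and let NS(t, λ) = γ(t) + λ v(t). There exists a smooth map n: I × ℝ → S² such that (NS, n, v) is a framed surface if and only if there exists a smooth function φ: I × ℝ → ℝ such that λ ℓ̄(t) cos φ(t, λ) − (α(t) + λ m̄(t)) sin φ(t, λ) = 0 for all (t, λ). -/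
open Matrix Real

section Helpers

private lemma lift_correct (A B Φ A' B' : ℝ → ℝ)
    (hA : ∀ x, HasDerivAt A (A' x) x) (hB : ∀ x, HasDerivAt B (B' x) x)
    (hΦ : ∀ x, HasDerivAt Φ (A x * B' x - B x * A' x) x)
    (h1 : ∀ x, A x ^ 2 + B x ^ 2 = 1)
    (hc0 : cos (Φ 0) = A 0) (hs0 : sin (Φ 0) = B 0) :
    ∀ x, cos (Φ x) = A x ∧ sin (Φ x) = B x := by
  have hAB : ∀ x, A x * A' x + B x * B' x = 0 := by
    intro x
    have h2 : HasDerivAt (fun y => A y ^ 2 + B y ^ 2)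
        (2 * A x ^ 1 * A' x + 2 * B x ^ 1 * B' x) x := ((hA x).pow 2).add ((hB x).pow 2)
    have h3 : (fun y => A y ^ 2 + B y ^ 2) = fun _ => (1:ℝ) := funext h1
    rw [h3] at h2
    have h4 := (hasDerivAt_const x (1:ℝ)).unique h2
    nlinarith [h4]
  set h : ℝ → ℝ := fun x => A x * cos (Φ x) + B x * sin (Φ x) with hh_def
  set k : ℝ → ℝ := fun x => B x * cos (Φ x) - A x * sin (Φ x) with hk_def
  have hc : ∀ x, HasDerivAt (fun y => cos (Φ y)) (-sin (Φ x) * (A x * B' x - B x * A' x)) x :=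
    fun x => (Real.hasDerivAt_cos (Φ x)).comp x (hΦ x)
  have hs : ∀ x, HasDerivAt (fun y => sin (Φ y)) (cos (Φ x) * (A x * B' x - B x * A' x)) x :=
    fun x => (Real.hasDerivAt_sin (Φ x)).comp x (hΦ x)
  have hh : ∀ x, HasDerivAt h 0 x := by
    intro x
    have := ((hA x).mul (hc x)).add ((hB x).mul (hs x))
    refine this.congr_deriv (Eq.symm ?_)
    linear_combination (-(A x * cos (Φ x)) - B x * sin (Φ x)) * hAB x
      + (cos (Φ x) * A' x + sin (Φ x) * B' x) * h1 x
  have hk : ∀ x, HasDerivAt k 0 x := by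
    intro x
    have := ((hB x).mul (hc x)).sub ((hA x).mul (hs x))
    refine this.congr_deriv (Eq.symm ?_)
    linear_combination (-(B x * cos (Φ x)) + A x * sin (Φ x)) * hAB x
      + (cos (Φ x) * B' x - sin (Φ x) * A' x) * h1 x
  have hhc : ∀ x, h x = 1 := by
    intro x
    have := is_const_of_deriv_eq_zero (fun y => (hh y).differentiableAt)
      (fun y => (hh y).deriv) x 0
    rw [this]
    simp only [hh_def, hc0, hs0]
    nlinarith [h1 0]
  have hkc : ∀ x, k x = 0 := by
    intro x
    have := is_const_of_deriv_eq_zero (fun y => (hk y).differentiableAt)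
      (fun y => (hk y).deriv) x 0
    rw [this]
    simp only [hk_def, hc0, hs0]
    ring
  intro x
  have e1 := hhc x
  have e2 := hkc x
  simp only [hh_def, hk_def] at e1 e2
  constructor
  · linear_combination A x * e1 + B x * e2 - cos (Φ x) * h1 x
  · linear_combination B x * e1 - A x * e2 - sin (Φ x) * h1 x

private lemma exists_angle {x y : ℝ} (h : x ^ 2 + y ^ 2 = 1) : ∃ θ : ℝ, cos θ = x ∧ sin θ = y := by
  have hx1 : -1 ≤ x := by nlinarith
  have hx2 : x ≤ 1 := by nlinarith
  rcases le_or_gt 0 y with hy | hy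
  · refine ⟨arccos x, Real.cos_arccos hx1 hx2, ?_⟩
    rw [Real.sin_arccos, show (1:ℝ) - x^2 = y^2 by linarith, Real.sqrt_sq hy]
  · refine ⟨-arccos x, by rw [Real.cos_neg]; exact Real.cos_arccos hx1 hx2, ?_⟩
    rw [Real.sin_neg, Real.sin_arccos, show (1:ℝ) - x^2 = y^2 by linarith,
      Real.sqrt_sq_eq_abs, abs_of_neg hy]
    ring

private lemma exists_smooth_lift (a b : ℝ × ℝ → ℝ) (ha : ContDiff ℝ (⊤ : ℕ∞) a) (hb : ContDiff ℝ (⊤ : ℕ∞) b)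
    (h1 : ∀ p, a p ^ 2 + b p ^ 2 = 1) :
    ∃ φ : ℝ × ℝ → ℝ, ContDiff ℝ (⊤ : ℕ∞) φ ∧ ∀ p, cos (φ p) = a p ∧ sin (φ p) = b p := by
  have hone : ((⊤ : ℕ∞) : WithTop ℕ∞) ≠ 0 := by simp
  have hda : Differentiable ℝ a := ha.differentiable hone
  have hdb : Differentiable ℝ b := hb.differentiable hone
  set A1 : ℝ × ℝ → ℝ := fun p => fderiv ℝ a p (1, 0) with hA1
  set A2 : ℝ × ℝ → ℝ := fun p => fderiv ℝ a p (0, 1) with hA2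
  set B1 : ℝ × ℝ → ℝ := fun p => fderiv ℝ b p (1, 0) with hB1
  set B2 : ℝ × ℝ → ℝ := fun p => fderiv ℝ b p (0, 1) with hB2
  have hA1c : Continuous A1 :=
    (ContinuousLinearMap.apply ℝ ℝ ((1:ℝ),(0:ℝ))).continuous.comp (ha.continuous_fderiv hone)
  have hA2c : Continuous A2 :=
    (ContinuousLinearMap.apply ℝ ℝ ((0:ℝ),(1:ℝ))).continuous.comp (ha.continuous_fderiv hone)
  have hB1c : Continuous B1 :=
    (ContinuousLinearMap.apply ℝ ℝ ((1:ℝ),(0:ℝ))).continuous.comp (hb.continuous_fderiv hone)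
  have hB2c : Continuous B2 :=
    (ContinuousLinearMap.apply ℝ ℝ ((0:ℝ),(1:ℝ))).continuous.comp (hb.continuous_fderiv hone)
  -- derivatives along lines
  have hvert : ∀ (f : ℝ × ℝ → ℝ), Differentiable ℝ f → ∀ t l,
      HasDerivAt (fun y => f (t, y)) (fderiv ℝ f (t, l) (0, 1)) l := by
    intro f hf t l
    exact (hf.differentiableAt.hasFDerivAt).comp_hasDerivAt l
      ((hasDerivAt_const l t).prodMk (hasDerivAt_id l))
  have hhoriz : ∀ (f : ℝ × ℝ → ℝ), Differentiable ℝ f → ∀ t,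
      HasDerivAt (fun s => f (s, 0)) (fderiv ℝ f (t, 0) (1, 0)) t := by
    intro f hf t
    exact (hf.differentiableAt.hasFDerivAt).comp_hasDerivAt t
      ((hasDerivAt_id t).prodMk (hasDerivAt_const t 0))
  set F2 : ℝ × ℝ → ℝ := fun p => a p * B2 p - b p * A2 p with hF2
  have hF2c : Continuous F2 := ((ha.continuous.mul hB2c).sub (hb.continuous.mul hA2c))
  set F1 : ℝ → ℝ := fun s => a (s, 0) * B1 (s, 0) - b (s, 0) * A1 (s, 0) with hF1
  have hline0 : Continuous (fun s : ℝ => ((s, 0) : ℝ × ℝ)) := by fun_prop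
  have hF1c : Continuous F1 := by
    exact ((ha.continuous.comp hline0).mul (hB1c.comp hline0)).sub
      ((hb.continuous.comp hline0).mul (hA1c.comp hline0))
  obtain ⟨θ₀, hθ₀c, hθ₀s⟩ := exists_angle (h1 (0, 0))
  set θ : ℝ → ℝ := fun t => θ₀ + ∫ s in (0:ℝ)..t, F1 s with hθ
  have hθd : ∀ t, HasDerivAt θ (F1 t) t := by
    intro t
    exact (intervalIntegral.integral_hasDerivAt_right (hF1c.intervalIntegrable 0 t)
      (hF1c.stronglyMeasurableAtFilter _ _) hF1c.continuousAt).const_add θ₀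
  have hθ0 : θ 0 = θ₀ := by simp [hθ]
  have hbase : ∀ t, cos (θ t) = a (t, 0) ∧ sin (θ t) = b (t, 0) := by
    apply lift_correct (fun t => a (t, 0)) (fun t => b (t, 0)) θ
      (fun t => A1 (t, 0)) (fun t => B1 (t, 0))
      (fun t => hhoriz a hda t) (fun t => hhoriz b hdb t)
      (fun t => hθd t) (fun t => h1 (t, 0))
    · rw [hθ0]; exact hθ₀c
    · rw [hθ0]; exact hθ₀s
  set φ : ℝ × ℝ → ℝ := fun p => θ p.1 + ∫ u in (0:ℝ)..p.2, F2 (p.1, u) with hφdef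
  have hcorrect : ∀ p, cos (φ p) = a p ∧ sin (φ p) = b p := by
    rintro ⟨t, l⟩
    have hvertline : Continuous (fun y : ℝ => ((t, y) : ℝ × ℝ)) := by fun_prop
    have hF2tc : Continuous (fun y => F2 (t, y)) := hF2c.comp hvertline
    have key := lift_correct (fun y => a (t, y)) (fun y => b (t, y)) (fun y => φ (t, y))
      (fun y => A2 (t, y)) (fun y => B2 (t, y))
      (fun y => hvert a hda t y) (fun y => hvert b hdb t y)
      (fun y => by
        have := (intervalIntegral.integral_hasDerivAt_right (hF2tc.intervalIntegrable 0 y)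
          (hF2tc.stronglyMeasurableAtFilter _ _) hF2tc.continuousAt).const_add (θ t)
        exact this)
      (fun y => h1 (t, y))
      (by simpa [hφdef] using (hbase t).1)
      (by simpa [hφdef] using (hbase t).2)
    exact key l
  have hθcont : Continuous θ :=
    continuous_iff_continuousAt.2 fun t => (hθd t).differentiableAt.continuousAt
  have h2 : Continuous fun p : ℝ × ℝ => ∫ u in (0:ℝ)..p.2, F2 (p.1, u) := by
    have : Continuous (Function.uncurry fun x y => F2 (x, y)) := by
      exact hF2c
    exact intervalIntegral.continuous_parametric_primitive_of_continuous this
  have hφcont : Continuous φ := (hθcont.comp continuous_fst).add h2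
  refine ⟨φ, ?_, hcorrect⟩
  rw [contDiff_iff_contDiffAt]
  intro p₀
  set u : ℝ × ℝ → ℝ := fun p => a p * a p₀ + b p * b p₀ with hu
  set w : ℝ × ℝ → ℝ := fun p => b p * a p₀ - a p * b p₀ with hw
  have hu0 : u p₀ = 1 := by simp only [hu]; nlinarith [h1 p₀]
  have hw0 : w p₀ = 0 := by simp only [hw]; ring
  have huc : ContDiff ℝ (⊤ : ℕ∞) u := (ha.mul contDiff_const).add (hb.mul contDiff_const)
  have hwc : ContDiff ℝ (⊤ : ℕ∞) w := (hb.mul contDiff_const).sub (ha.mul contDiff_const)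
  set ψ : ℝ × ℝ → ℝ := fun p => φ p₀ + arctan (w p / u p) with hψdef
  have hψ : ContDiffAt ℝ (⊤ : ℕ∞) ψ p₀ := by
    apply ContDiffAt.add contDiffAt_const
    exact Real.contDiff_arctan.contDiffAt.comp p₀
      (hwc.contDiffAt.div huc.contDiffAt (by rw [hu0]; norm_num))
  have h01 : (0:ℝ) < u p₀ := by rw [hu0]; norm_num
  have hUpos : ∀ᶠ p in nhds p₀, 0 < u p :=
    huc.continuous.continuousAt (Ioi_mem_nhds h01)
  have hψeq : ∀ p, 0 < u p → cos (ψ p) = a p ∧ sin (ψ p) = b p := by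
    intro p hup
    have hsq : u p ^ 2 + w p ^ 2 = 1 := by
      simp only [hu, hw]; nlinarith [h1 p, h1 p₀]
    have h1u : 1 + (w p / u p) ^ 2 = (1 / u p) ^ 2 := by
      field_simp
      linarith [hsq]
    have hsqrt : Real.sqrt (1 + (w p / u p) ^ 2) = 1 / u p := by
      rw [h1u]; exact Real.sqrt_sq (by positivity)
    have hcos : cos (arctan (w p / u p)) = u p := by
      rw [Real.cos_arctan, hsqrt]; field_simp
    have hsin : sin (arctan (w p / u p)) = w p := by
      rw [Real.sin_arctan, hsqrt]; field_simp
    constructor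
    · show cos (φ p₀ + arctan (w p / u p)) = a p
      rw [Real.cos_add, hcos, hsin, (hcorrect p₀).1, (hcorrect p₀).2]
      simp only [hu, hw]
      linear_combination a p * h1 p₀
    · show sin (φ p₀ + arctan (w p / u p)) = b p
      rw [Real.sin_add, hcos, hsin, (hcorrect p₀).1, (hcorrect p₀).2]
      simp only [hu, hw]
      linear_combination b p * h1 p₀
  have hψp₀ : ψ p₀ = φ p₀ := by
    simp [hψdef, hw0]
  have hδ : ∀ᶠ p in nhds p₀, ψ p = φ p := by
    have hcontδ : ContinuousAt (fun p => φ p - ψ p) p₀ :=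
      hφcont.continuousAt.sub hψ.continuousAt
    have hπ : 0 < π := Real.pi_pos
    have hsmall : ∀ᶠ p in nhds p₀, |φ p - ψ p| < 2 * π := by
      have ht : Filter.Tendsto (fun p => φ p - ψ p) (nhds p₀) (nhds (φ p₀ - ψ p₀)) := hcontδ
      rw [hψp₀, sub_self] at ht
      have := ht (Metric.ball_mem_nhds 0 (by positivity : (0:ℝ) < 2 * π))
      filter_upwards [this] with p hp
      simpa [Real.dist_eq] using hp
    filter_upwards [hsmall, hUpos] with p h2π hup
    have hcs := hψeq p hup
    have hcos1 : cos (φ p - ψ p) = 1 := by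
      rw [Real.cos_sub, (hcorrect p).1, (hcorrect p).2, hcs.1, hcs.2]
      nlinarith [h1 p]
    obtain ⟨n, hn⟩ := (Real.cos_eq_one_iff _).1 hcos1
    have hn0 : n = 0 := by
      by_contra h0
      have h1n : (1:ℝ) ≤ |(n:ℝ)| := by
        have := Int.one_le_abs (by omega : n ≠ 0)
        exact_mod_cast this
      have : |φ p - ψ p| = |(n:ℝ)| * (2 * π) := by
        rw [← hn, abs_mul, abs_of_pos (by positivity : (0:ℝ) < 2 * π)]
      nlinarith
    rw [hn0] at hn
    simp at hn
    linarith
  exact hψ.congr_of_eventuallyEq (Filter.eventuallyEq_of_mem hδ (fun p hp => hp)).symm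

private lemma parseval3 (v w : Fin 3 → ℝ) (hvv : v ⬝ᵥ v = 1) (hww : w ⬝ᵥ w = 1) (hvw : v ⬝ᵥ w = 0)
    (x y : Fin 3 → ℝ) :
    x ⬝ᵥ y = (x ⬝ᵥ v) * (y ⬝ᵥ v) + (x ⬝ᵥ w) * (y ⬝ᵥ w) + (x ⬝ᵥ (v ⨯₃ w)) * (y ⬝ᵥ (v ⨯₃ w)) := by
  simp only [dotProduct, Fin.sum_univ_three, cross_apply, Matrix.cons_val_zero,
    Matrix.cons_val_one, Matrix.head_cons, Matrix.cons_val_two, Matrix.tail_cons] at *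
  linear_combination
    (-( (x 0*y 0+x 1*y 1+x 2*y 2) * (w 0*w 0+w 1*w 1+w 2*w 2))
      + (x 0*w 0+x 1*w 1+x 2*w 2) * (w 0*y 0+w 1*y 1+w 2*y 2)) * hvv +
    (-(x 0*y 0+x 1*y 1+x 2*y 2) + (x 0*v 0+x 1*v 1+x 2*v 2) * (y 0*v 0+y 1*v 1+y 2*v 2)) * hww +
    ((x 0*y 0+x 1*y 1+x 2*y 2) * (v 0*w 0+v 1*w 1+v 2*w 2)
      - (x 0*v 0+x 1*v 1+x 2*v 2) * (w 0*y 0+w 1*y 1+w 2*y 2)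
      - (x 0*w 0+x 1*w 1+x 2*w 2) * (y 0*v 0+y 1*v 1+y 2*v 2)) * hvw

private lemma contDiff_dot {E : Type*} [NormedAddCommGroup E] [NormedSpace ℝ E]
    {f g : E → Fin 3 → ℝ} (hf : ContDiff ℝ (⊤ : ℕ∞) f) (hg : ContDiff ℝ (⊤ : ℕ∞) g) :
    ContDiff ℝ (⊤ : ℕ∞) fun x => f x ⬝ᵥ g x := by
  simp only [dotProduct, Fin.sum_univ_three]
  exact (((contDiff_pi.1 hf 0).mul (contDiff_pi.1 hg 0)).add
    ((contDiff_pi.1 hf 1).mul (contDiff_pi.1 hg 1))).add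
    ((contDiff_pi.1 hf 2).mul (contDiff_pi.1 hg 2))

end Helpers

/-- Existence of a framed-surface structure (NS, n, v) on the normal surface
NS(t, λ) = γ(t) + λ v(t) is equivalent to the existence of a smooth function φ with
λ ℓ̄(t) cos φ(t,λ) − (α(t) + λ m̄(t)) sin φ(t,λ) = 0. -/
theorem normal_surface_framed_iff
    (γ v w : ℝ → Fin 3 → ℝ)
    (hγ : ContDiff ℝ (⊤ : ℕ∞) γ) (hv : ContDiff ℝ (⊤ : ℕ∞) v) (hw : ContDiff ℝ (⊤ : ℕ∞) w)
    (hu₁ : ∀ t, v t ⬝ᵥ v t = 1) (hu₂ : ∀ t, w t ⬝ᵥ w t = 1)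
    (horth : ∀ t, v t ⬝ᵥ w t = 0)
    (ht₁ : ∀ t, deriv γ t ⬝ᵥ v t = 0) (ht₂ : ∀ t, deriv γ t ⬝ᵥ w t = 0)
    (μ : ℝ → Fin 3 → ℝ) (hμ : ∀ t, μ t = v t ⨯₃ w t)
    (ℓ' m' n' α : ℝ → ℝ)
    (hℓ : ∀ t, ℓ' t = deriv v t ⬝ᵥ w t)
    (hm : ∀ t, m' t = deriv v t ⬝ᵥ μ t)
    (hn : ∀ t, n' t = deriv w t ⬝ᵥ μ t)
    (hα : ∀ t, α t = deriv γ t ⬝ᵥ μ t)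
    (NS : ℝ → ℝ → Fin 3 → ℝ) (hNS : ∀ t lam, NS t lam = γ t + lam • v t) :
    (∃ n : ℝ → ℝ → Fin 3 → ℝ, ContDiff ℝ (⊤ : ℕ∞) (fun p : ℝ × ℝ => n p.1 p.2) ∧
        ∀ t lam, n t lam ⬝ᵥ n t lam = 1 ∧ n t lam ⬝ᵥ v t = 0 ∧
          deriv (fun s => NS s lam) t ⬝ᵥ n t lam = 0 ∧
          deriv (fun l => NS t l) lam ⬝ᵥ n t lam = 0) ↔
    (∃ φ : ℝ → ℝ → ℝ, ContDiff ℝ (⊤ : ℕ∞) (fun p : ℝ × ℝ => φ p.1 p.2) ∧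
        ∀ t lam, lam * ℓ' t * cos (φ t lam) - (α t + lam * m' t) * sin (φ t lam) = 0) := by
  have hone : ((⊤ : ℕ∞) : WithTop ℕ∞) ≠ 0 := by simp
  -- smoothness of μ
  have hμfun : μ = fun t => v t ⨯₃ w t := funext hμ
  have hμs : ContDiff ℝ (⊤ : ℕ∞) μ := by
    rw [hμfun]
    apply contDiff_pi.2
    intro i
    fin_cases i <;>
      simp only [cross_apply, Matrix.cons_val_zero, Matrix.cons_val_one, Matrix.head_cons,
        Matrix.cons_val_two, Matrix.tail_cons] <;>
    exact ((contDiff_pi.1 hv _).mul (contDiff_pi.1 hw _)).sub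
      ((contDiff_pi.1 hv _).mul (contDiff_pi.1 hw _))
  -- dot products within the frame
  have hvμ : ∀ t, v t ⬝ᵥ μ t = 0 := fun t => by rw [hμ t]; exact dot_self_cross _ _
  have hwμ : ∀ t, w t ⬝ᵥ μ t = 0 := fun t => by rw [hμ t]; exact dot_cross_self _ _
  have hμμ : ∀ t, μ t ⬝ᵥ μ t = 1 := by
    intro t
    rw [hμ t, cross_dot_cross, hu₁ t, hu₂ t, horth t]
    ring
  -- derivatives of NS
  have hγd : ∀ t, HasDerivAt γ (deriv γ t) t := fun t => ((hγ.differentiable hone) t).hasDerivAt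
  have hvd : ∀ t, HasDerivAt v (deriv v t) t := fun t => ((hv.differentiable hone) t).hasDerivAt
  have hNS₁ : ∀ t lam, deriv (fun s => NS s lam) t = deriv γ t + lam • deriv v t := by
    intro t lam
    have heq : (fun s => NS s lam) = fun s => γ s + lam • v s := funext fun s => hNS s lam
    rw [heq]
    exact ((hγd t).add ((hvd t).const_smul lam)).deriv
  have hNS₂ : ∀ t lam, deriv (fun l => NS t l) lam = v t := by
    intro t lam
    have heq : (fun l => NS t l) = fun l => γ t + l • v t := funext fun l => hNS t l
    rw [heq]
    have : HasDerivAt (fun l : ℝ => γ t + l • v t) ((1:ℝ) • v t) lam :=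
      ((hasDerivAt_id lam).smul_const (v t)).const_add (γ t)
    rw [this.deriv, one_smul]
  constructor
  · rintro ⟨n, hns, hnp⟩
    set a : ℝ × ℝ → ℝ := fun p => n p.1 p.2 ⬝ᵥ w p.1 with ha_def
    set b : ℝ × ℝ → ℝ := fun p => -(n p.1 p.2 ⬝ᵥ μ p.1) with hb_def
    have has : ContDiff ℝ (⊤ : ℕ∞) a := contDiff_dot hns (hw.comp contDiff_fst)
    have hbs : ContDiff ℝ (⊤ : ℕ∞) b := (contDiff_dot hns (hμs.comp contDiff_fst)).neg
    have h1 : ∀ p, a p ^ 2 + b p ^ 2 = 1 := by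
      rintro ⟨t, lam⟩
      have hp := parseval3 (v t) (w t) (hu₁ t) (hu₂ t) (horth t) (n t lam) (n t lam)
      rw [← hμ t] at hp
      have h1' := (hnp t lam).1
      have h2' := (hnp t lam).2.1
      simp only [ha_def, hb_def]
      rw [h1', h2'] at hp
      nlinarith [hp]
    obtain ⟨φ, hφs, hφ⟩ := exists_smooth_lift a b has hbs h1
    refine ⟨fun t lam => φ (t, lam), by simpa using hφs, ?_⟩
    intro t lam
    have hkey : α t * (n t lam ⬝ᵥ μ t) +
        lam * (ℓ' t * (n t lam ⬝ᵥ w t) + m' t * (n t lam ⬝ᵥ μ t)) = 0 := by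
      have h3 := (hnp t lam).2.2.1
      rw [hNS₁ t lam] at h3
      have hγn := parseval3 (v t) (w t) (hu₁ t) (hu₂ t) (horth t) (deriv γ t) (n t lam)
      have hvn := parseval3 (v t) (w t) (hu₁ t) (hu₂ t) (horth t) (deriv v t) (n t lam)
      rw [← hμ t] at hγn hvn
      rw [add_dotProduct, smul_dotProduct, smul_eq_mul] at h3
      rw [hγn, hvn, ht₁ t, ht₂ t, ← hα t, ← hℓ t, ← hm t, (hnp t lam).2.1] at h3
      ring_nf at h3 ⊢
      linarith [h3]
    have hc := (hφ (t, lam)).1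
    have hs := (hφ (t, lam)).2
    rw [hc, hs]
    simp only [ha_def, hb_def] at *
    linarith [hkey]
  · rintro ⟨φ, hφs, hφ⟩
    refine ⟨fun t lam => cos (φ t lam) • w t - sin (φ t lam) • μ t, ?_, ?_⟩
    · have hcos : ContDiff ℝ (⊤ : ℕ∞) fun p : ℝ × ℝ => cos (φ p.1 p.2) :=
        Real.contDiff_cos.comp hφs
      have hsin : ContDiff ℝ (⊤ : ℕ∞) fun p : ℝ × ℝ => sin (φ p.1 p.2) :=
        Real.contDiff_sin.comp hφs
      exact (hcos.smul (hw.comp contDiff_fst)).sub (hsin.smul (hμs.comp contDiff_fst))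
    · intro t lam
      have expand2 : ∀ x : Fin 3 → ℝ,
          (cos (φ t lam) • w t - sin (φ t lam) • μ t) ⬝ᵥ x =
            cos (φ t lam) * (w t ⬝ᵥ x) - sin (φ t lam) * (μ t ⬝ᵥ x) := by
        intro x
        rw [sub_dotProduct, smul_dotProduct, smul_dotProduct,
          smul_eq_mul, smul_eq_mul]
      have expand : ∀ x : Fin 3 → ℝ,
          x ⬝ᵥ (cos (φ t lam) • w t - sin (φ t lam) • μ t) =
            cos (φ t lam) * (x ⬝ᵥ w t) - sin (φ t lam) * (x ⬝ᵥ μ t) := by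
        intro x
        rw [dotProduct_sub, dotProduct_smul, dotProduct_smul,
          smul_eq_mul, smul_eq_mul]
      refine ⟨?_, ?_, ?_, ?_⟩
      · show (cos (φ t lam) • w t - sin (φ t lam) • μ t) ⬝ᵥ
            (cos (φ t lam) • w t - sin (φ t lam) • μ t) = 1
        rw [expand2, expand, expand, hu₂ t, hμμ t, hwμ t,
          dotProduct_comm (μ t) (w t), hwμ t]
        nlinarith [Real.sin_sq_add_cos_sq (φ t lam)]
      · show (cos (φ t lam) • w t - sin (φ t lam) • μ t) ⬝ᵥ v t = 0
        rw [expand2, dotProduct_comm (w t) (v t), horth t,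
          dotProduct_comm (μ t) (v t), hvμ t]
        ring
      · show deriv (fun s => NS s lam) t ⬝ᵥ
            (cos (φ t lam) • w t - sin (φ t lam) • μ t) = 0
        rw [hNS₁ t lam, add_dotProduct, smul_dotProduct, smul_eq_mul,
          expand, expand, ht₂ t, ← hα t, ← hℓ t, ← hm t]
        have := hφ t lam
        ring_nf
        ring_nf at this
        linarith [this]
      · show deriv (fun l => NS t l) lam ⬝ᵥ
            (cos (φ t lam) • w t - sin (φ t lam) • μ t) = 0
        rw [hNS₂ t lam, expand, horth t, hvμ t]
        ring
end

section
/- Let (γ, ν₁, ν₂) be a framed curve with m² + n² ≠ 0 everywhere and involute Inv(t) = γ(t) − (∫_{t₀}^t α ds) μ(t). Suppose t₁ is a singular point of Inv. Then: (1) γ is regular at t₁ if and only if t₁ is a 3/2-cusp of Inv; (2) t₁ is a 3/2-cusp of γ if and only if t₁ is a 4/3-cusp of Inv. -/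
open Matrix Real

private lemma cross_cross_self' (a b : Fin 3 → ℝ) :
    (a ⨯₃ b) ⨯₃ b = (a ⬝ᵥ b) • b - (b ⬝ᵥ b) • a := by
  funext i; fin_cases i <;> simp [cross_apply, dotProduct, Fin.sum_univ_three] <;> ring

private lemma self_cross_cross' (a b : Fin 3 → ℝ) :
    a ⨯₃ (a ⨯₃ b) = (a ⬝ᵥ b) • a - (a ⬝ᵥ a) • b := by
  funext i; fin_cases i <;> simp [cross_apply, dotProduct, Fin.sum_univ_three] <;> ring

private lemma cross_dot_cross' (a b : Fin 3 → ℝ) :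
    (a ⨯₃ b) ⬝ᵥ (a ⨯₃ b) = (a ⬝ᵥ a) * (b ⬝ᵥ b) - (a ⬝ᵥ b) ^ 2 := by
  simp [cross_apply, dotProduct, Fin.sum_univ_three]; ring

private lemma dot_cross_self' (a b : Fin 3 → ℝ) : b ⬝ᵥ (a ⨯₃ b) = 0 := by
  simp [cross_apply, dotProduct, Fin.sum_univ_three]; ring

private lemma dot_self_cross' (a b : Fin 3 → ℝ) : a ⬝ᵥ (a ⨯₃ b) = 0 := by
  simp [cross_apply, dotProduct, Fin.sum_univ_three]; ring

private lemma hasDerivAt_cross' {f g : ℝ → Fin 3 → ℝ} {f' g' : Fin 3 → ℝ} {t : ℝ}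
    (hf : HasDerivAt f f' t) (hg : HasDerivAt g g' t) :
    HasDerivAt (fun s => f s ⨯₃ g s) (f' ⨯₃ g t + f t ⨯₃ g') t := by
  rw [hasDerivAt_pi] at hf hg ⊢
  intro i
  fin_cases i <;>
  · simp only [cross_apply, Pi.add_apply, Matrix.cons_val_zero, Matrix.cons_val_one,
      Matrix.head_cons, Matrix.cons_val_two, Matrix.tail_cons]
    refine (((hf _).mul (hg _)).sub ((hf _).mul (hg _))).congr_deriv ?_
    simp; ring

private lemma pair_indep' {u v w : Fin 3 → ℝ} (hu : u ≠ 0) (huw : u ⬝ᵥ w = 0)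
    (hvw : v ⬝ᵥ w ≠ 0) : LinearIndependent ℝ ![u, v] := by
  rw [LinearIndependent.pair_iff]
  intro s t hst
  have h1 : (s • u + t • v) ⬝ᵥ w = 0 := by rw [hst]; simp
  rw [add_dotProduct, smul_dotProduct, smul_dotProduct, huw, smul_zero, zero_add,
    smul_eq_mul] at h1
  have ht : t = 0 := (mul_eq_zero.mp h1).resolve_right hvw
  subst ht
  simp only [zero_smul, add_zero, smul_eq_zero] at hst
  exact ⟨hst.resolve_right hu, rfl⟩

/-- Singularities of the involute: at a singular point t₁ of the involute,
γ is regular at t₁ iff the involute has a 3/2-cusp there, and γ has a 3/2-cusp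
at t₁ iff the involute has a 4/3-cusp there. -/
theorem involute_singularities
    (γ ν₁ ν₂ : ℝ → Fin 3 → ℝ)
    (hγ : ContDiff ℝ (⊤ : ℕ∞) γ) (hν₁ : ContDiff ℝ (⊤ : ℕ∞) ν₁) (hν₂ : ContDiff ℝ (⊤ : ℕ∞) ν₂)
    (hu₁ : ∀ t, ν₁ t ⬝ᵥ ν₁ t = 1) (hu₂ : ∀ t, ν₂ t ⬝ᵥ ν₂ t = 1)
    (horth : ∀ t, ν₁ t ⬝ᵥ ν₂ t = 0)
    (μ : ℝ → Fin 3 → ℝ) (hμ : ∀ t, μ t = ν₁ t ⨯₃ ν₂ t)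
    (ℓ m n α : ℝ → ℝ)
    (hℓs : ContDiff ℝ (⊤ : ℕ∞) ℓ) (hms : ContDiff ℝ (⊤ : ℕ∞) m) (hns : ContDiff ℝ (⊤ : ℕ∞) n)
    (hαs : ContDiff ℝ (⊤ : ℕ∞) α)
    (hdν₁ : ∀ t, deriv ν₁ t = ℓ t • ν₂ t + m t • μ t)
    (hdν₂ : ∀ t, deriv ν₂ t = -ℓ t • ν₁ t + n t • μ t)
    (hdγ : ∀ t, deriv γ t = α t • μ t)
    (hmn : ∀ t, m t ^ 2 + n t ^ 2 ≠ 0)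
    (t₀ : ℝ)
    (Inv : ℝ → Fin 3 → ℝ)
    (hInv : ∀ t, Inv t = γ t - (∫ s in t₀..t, α s) • μ t)
    (t₁ : ℝ) (hsing : deriv Inv t₁ = 0) :
    (deriv γ t₁ ≠ 0 ↔
      (deriv Inv t₁ = 0 ∧
        LinearIndependent ℝ ![iteratedDeriv 2 Inv t₁, iteratedDeriv 3 Inv t₁])) ∧
    ((deriv γ t₁ = 0 ∧
        LinearIndependent ℝ ![iteratedDeriv 2 γ t₁, iteratedDeriv 3 γ t₁]) ↔
      (deriv Inv t₁ = 0 ∧ iteratedDeriv 2 Inv t₁ = 0 ∧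
        LinearIndependent ℝ ![iteratedDeriv 3 Inv t₁, iteratedDeriv 4 Inv t₁])) := by
  -- basic differentiability
  have hγd : Differentiable ℝ γ := hγ.differentiable (by simp)
  have hν₁d : Differentiable ℝ ν₁ := hν₁.differentiable (by simp)
  have hν₂d : Differentiable ℝ ν₂ := hν₂.differentiable (by simp)
  have hmd : Differentiable ℝ m := hms.differentiable (by simp)
  have hnd : Differentiable ℝ n := hns.differentiable (by simp)
  have hαd : Differentiable ℝ α := hαs.differentiable (by simp)
  -- pointwise derivative data
  have hν₁h : ∀ t, HasDerivAt ν₁ (ℓ t • ν₂ t + m t • μ t) t := fun t => by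
    rw [← hdν₁ t]; exact (hν₁d t).hasDerivAt
  have hν₂h : ∀ t, HasDerivAt ν₂ (-ℓ t • ν₁ t + n t • μ t) t := fun t => by
    rw [← hdν₂ t]; exact (hν₂d t).hasDerivAt
  have hγh : ∀ t, HasDerivAt γ (α t • μ t) t := fun t => by
    rw [← hdγ t]; exact (hγd t).hasDerivAt
  -- the key auxiliary functions
  set A : ℝ → ℝ := fun t => ∫ s in t₀..t, α s with hA_def
  set B : ℝ → Fin 3 → ℝ := fun t => m t • ν₁ t + n t • ν₂ t with hB_def
  set D : ℝ → Fin 3 → ℝ := fun t =>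
    (deriv m t - ℓ t * n t) • ν₁ t + (deriv n t + ℓ t * m t) • ν₂ t
      + (m t * m t + n t * n t) • μ t with hD_def
  have hA : ∀ t, HasDerivAt A (α t) t := fun t =>
    intervalIntegral.integral_hasDerivAt_right
      (hαs.continuous.intervalIntegrable _ _)
      (hαs.continuous.stronglyMeasurableAtFilter _ _) hαs.continuous.continuousAt
  -- derivative of μ
  have hμh : ∀ t, HasDerivAt μ (-(B t)) t := by
    intro t
    have hfun : μ = fun s => ν₁ s ⨯₃ ν₂ s := funext hμ
    have h3 := hasDerivAt_cross' (hν₁h t) (hν₂h t)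
    rw [hfun]
    convert h3 using 1
    simp only [hB_def]
    rw [_root_.map_add, _root_.map_smul, _root_.map_smul, LinearMap.add_apply,
      LinearMap.smul_apply, LinearMap.smul_apply, _root_.map_add, _root_.map_smul,
      _root_.map_smul]
    show -(m t • ν₁ t + n t • ν₂ t) =
      (ℓ t • (ν₂ t ⨯₃ ν₂ t) + m t • (μ t ⨯₃ ν₂ t))
        + (-ℓ t • (ν₁ t ⨯₃ ν₁ t) + n t • (ν₁ t ⨯₃ μ t))
    rw [cross_self, cross_self, hμ t, cross_cross_self', self_cross_cross',
      hu₁ t, hu₂ t, horth t]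
    module
  -- derivative of B
  have hBh : ∀ t, HasDerivAt B (D t) t := by
    intro t
    have h := ((hmd t).hasDerivAt.smul (hν₁h t)).add ((hnd t).hasDerivAt.smul (hν₂h t))
    refine h.congr_deriv ?_
    simp only [D]
    module
  -- derivative of Inv
  have hInvh : ∀ t, HasDerivAt Inv (A t • B t) t := by
    intro t
    have hfun : Inv = fun s => γ s - A s • μ s := funext hInv
    have h := (hγh t).sub ((hA t).smul (hμh t))
    rw [hfun]
    refine h.congr_deriv ?_
    simp only [B]
    module
  have hderivInv : deriv Inv = fun t => A t • B t := funext fun t => (hInvh t).deriv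
  -- dot products
  have hμμ : μ t₁ ⬝ᵥ μ t₁ = 1 := by
    rw [hμ t₁, cross_dot_cross', hu₁, hu₂, horth]; norm_num
  have hν₁μ : ν₁ t₁ ⬝ᵥ μ t₁ = 0 := by rw [hμ t₁]; exact dot_self_cross' _ _
  have hν₂μ : ν₂ t₁ ⬝ᵥ μ t₁ = 0 := by rw [hμ t₁]; exact dot_cross_self' _ _
  have hBμ : B t₁ ⬝ᵥ μ t₁ = 0 := by
    simp only [hB_def, add_dotProduct, smul_dotProduct, hν₁μ, hν₂μ]; simp
  have hμB : μ t₁ ⬝ᵥ B t₁ = 0 := by rw [dotProduct_comm]; exact hBμ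
  have hDμ : D t₁ ⬝ᵥ μ t₁ = m t₁ * m t₁ + n t₁ * n t₁ := by
    simp only [hD_def, add_dotProduct, smul_dotProduct, hν₁μ, hν₂μ, hμμ]; simp
  have hBB : B t₁ ⬝ᵥ B t₁ = m t₁ * m t₁ + n t₁ * n t₁ := by
    simp only [hB_def, add_dotProduct, dotProduct_add, smul_dotProduct, dotProduct_smul,
      hu₁, hu₂, horth, dotProduct_comm (ν₂ t₁) (ν₁ t₁)]
    simp only [smul_eq_mul]; ring
  have hmn' : m t₁ * m t₁ + n t₁ * n t₁ ≠ 0 := by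
    simpa [pow_two] using hmn t₁
  have hB0 : B t₁ ≠ 0 := by
    intro h; exact hmn' (by rw [← hBB, h, zero_dotProduct])
  have hμ0 : μ t₁ ≠ 0 := by
    intro h; rw [h] at hμμ; simp at hμμ
  -- A vanishes at the singular point
  have hAt₁ : A t₁ = 0 := by
    have h : A t₁ • B t₁ = 0 := by rw [← congrFun hderivInv t₁]; exact hsing
    exact (smul_eq_zero.mp h).resolve_right hB0
  -- smoothness of D and iterated derivatives existence
  have hν₁i := contDiff_pi.mp (hν₁.of_le (by simp) : ContDiff ℝ ((⊤:ℕ∞) : WithTop ℕ∞) ν₁)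
  have hν₂i := contDiff_pi.mp (hν₂.of_le (by simp) : ContDiff ℝ ((⊤:ℕ∞) : WithTop ℕ∞) ν₂)
  have hμs : ContDiff ℝ ((⊤:ℕ∞) : WithTop ℕ∞) μ := by
    have hfun : μ = fun s => ν₁ s ⨯₃ ν₂ s := funext hμ
    rw [hfun, contDiff_pi]
    intro i
    fin_cases i <;>
    · simp only [cross_apply, Matrix.cons_val_zero, Matrix.cons_val_one, Matrix.head_cons,
        Matrix.cons_val_two, Matrix.tail_cons]
      exact ((hν₁i _).mul (hν₂i _)).sub ((hν₁i _).mul (hν₂i _))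
  have hν₁T : ContDiff ℝ ((⊤:ℕ∞) : WithTop ℕ∞) ν₁ := hν₁.of_le (by simp)
  have hν₂T : ContDiff ℝ ((⊤:ℕ∞) : WithTop ℕ∞) ν₂ := hν₂.of_le (by simp)
  have hℓT : ContDiff ℝ ((⊤:ℕ∞) : WithTop ℕ∞) ℓ := hℓs.of_le (by simp)
  have hmT : ContDiff ℝ ((⊤:ℕ∞) : WithTop ℕ∞) m := hms.of_le (by simp)
  have hnT : ContDiff ℝ ((⊤:ℕ∞) : WithTop ℕ∞) n := hns.of_le (by simp)
  have hm' : ContDiff ℝ ((⊤:ℕ∞) : WithTop ℕ∞) (deriv m) := (contDiff_infty_iff_deriv.mp hmT).2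
  have hn' : ContDiff ℝ ((⊤:ℕ∞) : WithTop ℕ∞) (deriv n) := (contDiff_infty_iff_deriv.mp hnT).2
  have hDs : ContDiff ℝ ((⊤:ℕ∞) : WithTop ℕ∞) D := by
    rw [hD_def]
    exact (((hm'.sub (hℓT.mul hnT)).smul hν₁T).add
      ((hn'.add (hℓT.mul hmT)).smul hν₂T)).add
      (((hmT.mul hmT).add (hnT.mul hnT)).smul hμs)
  have hDh : ∀ t, HasDerivAt D (deriv D t) t := fun t =>
    ((contDiff_infty_iff_deriv.mp hDs).1 t).hasDerivAt
  have hD's : ContDiff ℝ ((⊤:ℕ∞) : WithTop ℕ∞) (deriv D) := (contDiff_infty_iff_deriv.mp hDs).2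
  have hD'h : ∀ t, HasDerivAt (deriv D) (deriv (deriv D) t) t := fun t =>
    ((contDiff_infty_iff_deriv.mp hD's).1 t).hasDerivAt
  have hαT : ContDiff ℝ ((⊤:ℕ∞) : WithTop ℕ∞) α := hαs.of_le (by simp)
  have hα's : ContDiff ℝ ((⊤:ℕ∞) : WithTop ℕ∞) (deriv α) := (contDiff_infty_iff_deriv.mp hαT).2
  have hα'h : ∀ t, HasDerivAt α (deriv α t) t := fun t => (hαd t).hasDerivAt
  have hα''h : ∀ t, HasDerivAt (deriv α) (deriv (deriv α) t) t := fun t =>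
    ((contDiff_infty_iff_deriv.mp hα's).1 t).hasDerivAt
  -- iterated derivatives of Inv
  have hF2 : ∀ t, HasDerivAt (fun s => A s • B s) (α t • B t + A t • D t) t := by
    intro t
    have h := (hA t).smul (hBh t)
    refine h.congr_deriv ?_
    module
  have h2fun : iteratedDeriv 2 Inv = fun t => α t • B t + A t • D t := by
    have e2 : iteratedDeriv 2 Inv = deriv (iteratedDeriv 1 Inv) := iteratedDeriv_succ
    rw [e2, iteratedDeriv_one, hderivInv]
    exact funext fun t => (hF2 t).deriv
  have hF3 : ∀ t, HasDerivAt (fun s => α s • B s + A s • D s)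
      (deriv α t • B t + α t • D t + (α t • D t + A t • deriv D t)) t := by
    intro t
    have h := ((hα'h t).smul (hBh t)).add ((hA t).smul (hDh t))
    refine h.congr_deriv ?_
    module
  have h3fun : iteratedDeriv 3 Inv =
      fun t => deriv α t • B t + α t • D t + (α t • D t + A t • deriv D t) := by
    have e3 : iteratedDeriv 3 Inv = deriv (iteratedDeriv 2 Inv) := iteratedDeriv_succ
    rw [e3, h2fun]
    exact funext fun t => (hF3 t).deriv
  have hF4 : HasDerivAt (fun s => deriv α s • B s + α s • D s + (α s • D s + A s • deriv D s))
      ((deriv (deriv α) t₁ • B t₁ + deriv α t₁ • D t₁)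
        + (deriv α t₁ • D t₁ + α t₁ • deriv D t₁)
        + ((deriv α t₁ • D t₁ + α t₁ • deriv D t₁)
          + (α t₁ • deriv D t₁ + A t₁ • deriv (deriv D) t₁))) t₁ := by
    have h := (((hα''h t₁).smul (hBh t₁)).add ((hα'h t₁).smul (hDh t₁))).add
      (((hα'h t₁).smul (hDh t₁)).add ((hA t₁).smul (hD'h t₁)))
    refine h.congr_deriv ?_
    module
  have h4val : iteratedDeriv 4 Inv t₁ =
      (deriv (deriv α) t₁ • B t₁ + deriv α t₁ • D t₁)
        + (deriv α t₁ • D t₁ + α t₁ • deriv D t₁)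
        + ((deriv α t₁ • D t₁ + α t₁ • deriv D t₁)
          + (α t₁ • deriv D t₁ + A t₁ • deriv (deriv D) t₁)) := by
    have e4 : iteratedDeriv 4 Inv = deriv (iteratedDeriv 3 Inv) := iteratedDeriv_succ
    rw [e4, h3fun]
    exact hF4.deriv
  -- iterated derivatives of γ
  have hγfun : deriv γ = fun t => α t • μ t := funext hdγ
  have hG2 : ∀ t, HasDerivAt (fun s => α s • μ s) (deriv α t • μ t + α t • (-(B t))) t := by
    intro t
    have h := (hα'h t).smul (hμh t)
    refine h.congr_deriv ?_
    module
  have h2γfun : iteratedDeriv 2 γ = fun t => deriv α t • μ t + α t • (-(B t)) := by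
    have e2 : iteratedDeriv 2 γ = deriv (iteratedDeriv 1 γ) := iteratedDeriv_succ
    rw [e2, iteratedDeriv_one, hγfun]
    exact funext fun t => (hG2 t).deriv
  have hG3 : HasDerivAt (fun s => deriv α s • μ s + α s • (-(B s)))
      ((deriv (deriv α) t₁ • μ t₁ + deriv α t₁ • (-(B t₁)))
        + (deriv α t₁ • (-(B t₁)) + α t₁ • (-(D t₁)))) t₁ := by
    have h := ((hα''h t₁).smul (hμh t₁)).add ((hα'h t₁).smul ((hBh t₁).neg))
    refine h.congr_deriv ?_
    rw [Pi.neg_apply]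
    module
  have h3γval : iteratedDeriv 3 γ t₁ =
      (deriv (deriv α) t₁ • μ t₁ + deriv α t₁ • (-(B t₁)))
        + (deriv α t₁ • (-(B t₁)) + α t₁ • (-(D t₁))) := by
    have e3 : iteratedDeriv 3 γ = deriv (iteratedDeriv 2 γ) := iteratedDeriv_succ
    rw [e3, h2γfun]
    exact hG3.deriv
  -- values at t₁
  have hval2 : iteratedDeriv 2 Inv t₁ = α t₁ • B t₁ := by
    have := congrFun h2fun t₁
    rw [hAt₁, zero_smul, add_zero] at this
    exact this
  have hval3 : iteratedDeriv 3 Inv t₁ =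
      deriv α t₁ • B t₁ + α t₁ • D t₁ + α t₁ • D t₁ := by
    have := congrFun h3fun t₁
    rw [hAt₁, zero_smul, add_zero] at this
    exact this
  constructor
  · -- Part 1
    constructor
    · intro hreg
      refine ⟨hsing, ?_⟩
      have ha : α t₁ ≠ 0 := fun h => hreg (by rw [hdγ t₁, h, zero_smul])
      rw [hval2, hval3]
      apply pair_indep' (w := μ t₁)
      · exact smul_ne_zero ha hB0
      · simp only [smul_dotProduct, hBμ, smul_zero]
      · simp only [add_dotProduct, smul_dotProduct, hBμ, hDμ, smul_eq_mul, mul_zero,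
          zero_add]
        intro h
        rcases mul_eq_zero.mp (by linarith : α t₁ * (m t₁ * m t₁ + n t₁ * n t₁) = 0) with
          h' | h'
        · exact ha h'
        · exact hmn' h'
    · rintro ⟨-, hli⟩
      have h2ne : iteratedDeriv 2 Inv t₁ ≠ 0 := by
        have := hli.ne_zero 0
        simpa using this
      rw [hval2] at h2ne
      have ha : α t₁ ≠ 0 := fun h => h2ne (by rw [h, zero_smul])
      rw [hdγ t₁]
      exact smul_ne_zero ha hμ0
  · -- Part 2
    constructor
    · rintro ⟨hg0, hli⟩
      have ha : α t₁ = 0 := by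
        rw [hdγ t₁] at hg0
        exact (smul_eq_zero.mp hg0).resolve_right hμ0
      have hγ2 : iteratedDeriv 2 γ t₁ = deriv α t₁ • μ t₁ := by
        have := congrFun h2γfun t₁
        rw [ha, zero_smul, add_zero] at this
        exact this
      have ha' : deriv α t₁ ≠ 0 := by
        intro h
        have h2ne : iteratedDeriv 2 γ t₁ ≠ 0 := by simpa using hli.ne_zero 0
        exact h2ne (by rw [hγ2, h, zero_smul])
      refine ⟨hsing, by rw [hval2, ha, zero_smul], ?_⟩
      have hval3' : iteratedDeriv 3 Inv t₁ = deriv α t₁ • B t₁ := by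
        rw [hval3, ha, zero_smul, add_zero, add_zero]
      have hval4' : iteratedDeriv 4 Inv t₁ =
          deriv (deriv α) t₁ • B t₁ + deriv α t₁ • D t₁
            + deriv α t₁ • D t₁ + deriv α t₁ • D t₁ := by
        rw [h4val, ha, hAt₁, zero_smul, zero_smul]
        module
      rw [hval3', hval4']
      apply pair_indep' (w := μ t₁)
      · exact smul_ne_zero ha' hB0
      · simp only [smul_dotProduct, hBμ, smul_zero]
      · simp only [add_dotProduct, smul_dotProduct, hBμ, hDμ, smul_eq_mul, mul_zero,
          zero_add]
        intro h
        rcases mul_eq_zero.mp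
          (by linarith : deriv α t₁ * (m t₁ * m t₁ + n t₁ * n t₁) = 0) with h' | h'
        · exact ha' h'
        · exact hmn' h'
    · rintro ⟨-, h2z, hli⟩
      have ha : α t₁ = 0 := by
        rw [hval2] at h2z
        exact (smul_eq_zero.mp h2z).resolve_right hB0
      have ha' : deriv α t₁ ≠ 0 := by
        intro h
        have h3ne : iteratedDeriv 3 Inv t₁ ≠ 0 := by simpa using hli.ne_zero 0
        exact h3ne (by rw [hval3, ha, h, zero_smul, zero_smul]; simp)
      refine ⟨by rw [hdγ t₁, ha, zero_smul], ?_⟩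
      have hγ2 : iteratedDeriv 2 γ t₁ = deriv α t₁ • μ t₁ := by
        have := congrFun h2γfun t₁
        rw [ha, zero_smul, add_zero] at this
        exact this
      have hγ3 : iteratedDeriv 3 γ t₁ =
          deriv (deriv α) t₁ • μ t₁ + deriv α t₁ • (-(B t₁)) + deriv α t₁ • (-(B t₁)) := by
        rw [h3γval, ha, zero_smul, add_zero]
      rw [hγ2, hγ3]
      apply pair_indep' (w := B t₁)
      · exact smul_ne_zero ha' hμ0
      · simp only [smul_dotProduct, hμB, smul_zero]
      · simp only [add_dotProduct, smul_dotProduct, hμB, neg_dotProduct, hBB,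
          smul_eq_mul, mul_zero, zero_add]
        intro h
        rcases mul_eq_zero.mp
          (by linarith : deriv α t₁ * (m t₁ * m t₁ + n t₁ * n t₁) = 0) with h' | h'
        · exact ha' h'
        · exact hmn' h'
end
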